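/- Let S ⊆ {1, 2, 3, …} be nonempty. Then the closure of the commutator subgroup of G_S (with respect to the product topology on K × K) equals the central subgroup N = K × {0} = {(a, 0) : a ∈ K}. -/

import Mathlib

open Filter Topology

noncomputable section


/-- `𝔽_p((t))`, the field of formal Laurent series over `𝔽_p = ℤ/pℤ`. -/
abbrev Kp (p : ℕ) : Type := HahnSeries ℤ (ZMod p)

lemma isPWO_Ici (a : ℤ) : (Set.Ici a).IsPWO := by
  have h2 : ((fun k : ℕ => a + (k : ℤ)) '' Set.univ).IsPWO :=
    ((Set.isWF_univ_iff.mpr ⟨wellFounded_lt⟩).isPWO).image_of_monotone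
      (fun i j hij => by omega)
  have heq : Set.Ici a = (fun k : ℕ => a + (k : ℤ)) '' Set.univ := by
    ext m
    simp only [Set.image_univ, Set.mem_range, Set.mem_Ici]
    constructor
    · intro hm; exact ⟨(m - a).toNat, by omega⟩
    · rintro ⟨k, rfl⟩; omega
  rw [heq]; exact h2

/-- `η_S(x,y)`: the Laurent series whose coefficient of `t^m` is
`∑_{n ∈ S} x_{m-n} · y_{m+n}` (a finite sum for each `m`). -/
def etaS (p : ℕ) (S : Set ℕ) (x y : Kp p) : Kp p :=
  ⟨fun m => ∑ᶠ n ∈ S, x.coeff (m - (n : ℤ)) * y.coeff (m + (n : ℤ)), by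
    refine (isPWO_Ici x.order).mono ?_
    intro m hm
    simp only [Function.mem_support] at hm
    rw [Set.mem_Ici]
    by_contra hlt
    push_neg at hlt
    apply hm
    apply finsum_mem_of_eqOn_zero
    intro n _
    have hc : x.coeff (m - (n : ℤ)) = 0 :=
      HahnSeries.coeff_eq_zero_of_lt_order (by omega)
    show x.coeff (m - (n : ℤ)) * y.coeff (m + (n : ℤ)) = (0 : ℕ → ZMod p) n
    rw [hc, zero_mul, Pi.zero_apply]⟩

lemma etaS_coeff (p : ℕ) (S : Set ℕ) (x y : Kp p) (m : ℤ) :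
    (etaS p S x y).coeff m = ∑ᶠ n ∈ S, x.coeff (m - (n : ℤ)) * y.coeff (m + (n : ℤ)) := rfl

lemma eta_supp_finite (p : ℕ) (S : Set ℕ) (x y : Kp p) (m : ℤ) :
    (S ∩ Function.support fun n : ℕ => x.coeff (m - (n : ℤ)) * y.coeff (m + (n : ℤ))).Finite := by
  by_cases hx : x = 0
  · subst hx
    have : (Function.support fun n : ℕ =>
        (0 : Kp p).coeff (m - (n : ℤ)) * y.coeff (m + (n : ℤ))) = ∅ := by
      ext n; simp
    rw [this, Set.inter_empty]
    exact Set.finite_empty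
  · refine Set.Finite.subset (Set.finite_Iic (m - x.order).toNat) ?_
    rintro n ⟨hnS, hn⟩
    simp only [Function.mem_support] at hn
    have hc : x.coeff (m - (n : ℤ)) ≠ 0 := fun h => hn (by rw [h, zero_mul])
    have hord := HahnSeries.order_le_of_coeff_ne_zero hc
    simp only [Set.mem_Iic]
    omega

lemma etaS_add_left (p : ℕ) (S : Set ℕ) (x y z : Kp p) :
    etaS p S (x + y) z = etaS p S x z + etaS p S y z := by
  apply HahnSeries.ext
  funext m
  rw [HahnSeries.coeff_add, etaS_coeff, etaS_coeff, etaS_coeff]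
  rw [← finsum_mem_add_distrib' (eta_supp_finite p S x z m) (eta_supp_finite p S y z m)]
  apply finsum_mem_congr rfl
  intro n _
  rw [HahnSeries.coeff_add, add_mul]

lemma etaS_add_right (p : ℕ) (S : Set ℕ) (x y z : Kp p) :
    etaS p S x (y + z) = etaS p S x y + etaS p S x z := by
  apply HahnSeries.ext
  funext m
  rw [HahnSeries.coeff_add, etaS_coeff, etaS_coeff, etaS_coeff]
  rw [← finsum_mem_add_distrib' (eta_supp_finite p S x y m) (eta_supp_finite p S x z m)]
  apply finsum_mem_congr rfl
  intro n _
  rw [HahnSeries.coeff_add, mul_add]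

lemma etaS_zero_left (p : ℕ) (S : Set ℕ) (y : Kp p) : etaS p S 0 y = 0 := by
  apply HahnSeries.ext
  funext m
  rw [etaS_coeff, HahnSeries.coeff_zero]
  apply finsum_mem_of_eqOn_zero
  intro n _
  show (0 : Kp p).coeff (m - (n : ℤ)) * y.coeff (m + (n : ℤ)) = (0 : ℕ → ZMod p) n
  rw [HahnSeries.coeff_zero, zero_mul, Pi.zero_apply]

lemma etaS_zero_right (p : ℕ) (S : Set ℕ) (x : Kp p) : etaS p S x 0 = 0 := by
  apply HahnSeries.ext
  funext m
  rw [etaS_coeff, HahnSeries.coeff_zero]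
  apply finsum_mem_of_eqOn_zero
  intro n _
  show x.coeff (m - (n : ℤ)) * (0 : Kp p).coeff (m + (n : ℤ)) = (0 : ℕ → ZMod p) n
  rw [HahnSeries.coeff_zero, mul_zero, Pi.zero_apply]

lemma etaS_neg_comm (p : ℕ) (S : Set ℕ) (x y : Kp p) :
    etaS p S (-x) y = etaS p S x (-y) := by
  apply HahnSeries.ext
  funext m
  rw [etaS_coeff, etaS_coeff]
  apply finsum_mem_congr rfl
  intro n _
  rw [HahnSeries.coeff_neg, HahnSeries.coeff_neg, neg_mul, mul_neg]

/-- The central extension `G_S = 𝔽_p((t)) ×_{η_S} 𝔽_p((t))`: underlying set `K × K` with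
multiplication `(w,x)(y,z) = (w + y + η_S(x,z), x + z)`. -/
@[ext] structure GS (p : ℕ) (S : Set ℕ) : Type where
  a : Kp p
  b : Kp p

namespace GS

variable {p : ℕ} {S : Set ℕ}

instance : Mul (GS p S) := ⟨fun g h => ⟨g.a + h.a + etaS p S g.b h.b, g.b + h.b⟩⟩
instance : One (GS p S) := ⟨⟨0, 0⟩⟩
instance : Inv (GS p S) := ⟨fun g => ⟨-g.a - etaS p S g.b (-g.b), -g.b⟩⟩

@[simp] lemma mul_a (g h : GS p S) : (g * h).a = g.a + h.a + etaS p S g.b h.b := rfl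
@[simp] lemma mul_b (g h : GS p S) : (g * h).b = g.b + h.b := rfl
@[simp] lemma one_a : (1 : GS p S).a = 0 := rfl
@[simp] lemma one_b : (1 : GS p S).b = 0 := rfl
@[simp] lemma inv_a (g : GS p S) : (g⁻¹).a = -g.a - etaS p S g.b (-g.b) := rfl
@[simp] lemma inv_b (g : GS p S) : (g⁻¹).b = -g.b := rfl

instance instGroup : Group (GS p S) where
  mul := (· * ·)
  one := 1
  inv := (·⁻¹)
  mul_assoc g h k := by
    ext
    · simp only [mul_a, mul_b]
      rw [etaS_add_left, etaS_add_right]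
      abel_nf
    · simp only [mul_b]
      abel_nf
  one_mul g := by
    ext
    · simp [etaS_zero_left]
    · simp
  mul_one g := by
    ext
    · simp [etaS_zero_right]
    · simp
  inv_mul_cancel g := by
    ext
    · simp only [mul_a, inv_a, inv_b, one_a, etaS_neg_comm]
      abel_nf
    · simp only [mul_b, inv_b, one_b]
      abel_nf

end GS

/-- The subgroup of series all of whose coefficients below `k` vanish. -/
def hahnU (R : Type*) [AddCommGroup R] (k : ℤ) : AddSubgroup (HahnSeries ℤ R) where
  carrier := {x | ∀ j : ℤ, j < k → x.coeff j = 0}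
  zero_mem' := by intro j _; exact HahnSeries.coeff_zero
  add_mem' := by
    intro a b ha hb j hj
    rw [HahnSeries.coeff_add, ha j hj, hb j hj, add_zero]
  neg_mem' := by
    intro a ha j hj
    rw [HahnSeries.coeff_neg, ha j hj, neg_zero]

/-- The `t`-adic (valuation) topology: the group topology in which the subgroups `hahnU R k`,
`k ∈ ℤ`, form a neighbourhood basis of `0`. -/
instance hahnTopology (R : Type*) [AddCommGroup R] : TopologicalSpace (HahnSeries ℤ R) :=
  ⨅ k : ℤ, TopologicalSpace.induced
    (fun x : HahnSeries ℤ R => (QuotientAddGroup.mk x : HahnSeries ℤ R ⧸ hahnU R k)) ⊥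

/-- `G_S` carries the product topology of `K × K`. -/
instance (p : ℕ) (S : Set ℕ) : TopologicalSpace (GS p S) :=
  TopologicalSpace.induced (fun g : GS p S => (g.a, g.b)) inferInstance


section Aux

variable {p : ℕ} {S : Set ℕ}

lemma etaS_neg_right (p : ℕ) (S : Set ℕ) (x y : Kp p) :
    etaS p S x (-y) = - etaS p S x y := by
  have h := etaS_add_right p S x y (-y)
  rw [add_neg_cancel, etaS_zero_right] at h
  exact eq_neg_of_add_eq_zero_right h.symm

lemma etaS_neg_left (p : ℕ) (S : Set ℕ) (x y : Kp p) :
    etaS p S (-x) y = - etaS p S x y := by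
  rw [etaS_neg_comm, etaS_neg_right]

open scoped commutatorElement in
lemma GS.commutator_eq (g h : GS p S) :
    ⁅g, h⁆ = ⟨etaS p S g.b h.b - etaS p S h.b g.b, (0 : Kp p)⟩ := by
  show g * h * g⁻¹ * h⁻¹ = _
  ext
  · simp only [GS.mul_a, GS.mul_b, GS.inv_a, GS.inv_b, etaS_add_left, etaS_neg_left,
      etaS_neg_right]
    abel
  · simp only [GS.mul_b, GS.inv_b]
    abel

lemma etaS_single_single (hS : ∀ n ∈ S, 1 ≤ n) {n₀ : ℕ} (hn₀ : n₀ ∈ S) (m : ℤ)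
    (c d : ZMod p) :
    etaS p S (HahnSeries.single (m - (n₀ : ℤ)) c) (HahnSeries.single (m + (n₀ : ℤ)) d)
      = HahnSeries.single m (c * d) := by
  apply HahnSeries.ext
  funext m'
  rw [etaS_coeff]
  rw [finsum_mem_eq_sum_of_subset _ (t := {n₀}) ?h1 ?h2]
  · rw [Finset.sum_singleton, HahnSeries.coeff_single, HahnSeries.coeff_single,
      HahnSeries.coeff_single]
    by_cases hm : m' = m
    · subst hm; simp
    · rw [if_neg hm, if_neg (show ¬(m' - (n₀:ℤ) = m - (n₀:ℤ)) by omega), zero_mul]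
  case h1 =>
    rintro n ⟨-, hn⟩
    simp only [Function.mem_support] at hn
    simp only [Finset.coe_singleton, Set.mem_singleton_iff]
    by_contra hne
    apply hn
    rw [HahnSeries.coeff_single, HahnSeries.coeff_single]
    by_cases h1 : m' - (n : ℤ) = m - (n₀ : ℤ)
    · rw [if_neg (show ¬(m' + (n:ℤ) = m + (n₀:ℤ)) by omega), mul_zero]
    · rw [if_neg h1, zero_mul]
  case h2 =>
    intro n hn
    simp only [Finset.coe_singleton, Set.mem_singleton_iff] at hn
    subst hn; exact hn₀

lemma etaS_single_single' (hS : ∀ n ∈ S, 1 ≤ n) (n₀ : ℕ) (m : ℤ) (c d : ZMod p) :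
    etaS p S (HahnSeries.single (m + (n₀ : ℤ)) d) (HahnSeries.single (m - (n₀ : ℤ)) c)
      = 0 := by
  apply HahnSeries.ext
  funext m'
  rw [etaS_coeff, HahnSeries.coeff_zero]
  apply finsum_mem_of_eqOn_zero
  intro n hn
  have h1 : 1 ≤ n := hS n hn
  show (HahnSeries.single (m + (n₀ : ℤ)) d).coeff (m' - (n : ℤ)) *
      (HahnSeries.single (m - (n₀ : ℤ)) c).coeff (m' + (n : ℤ)) = (0 : ℕ → ZMod p) n
  rw [HahnSeries.coeff_single, HahnSeries.coeff_single, Pi.zero_apply]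
  by_cases hA : m' - (n : ℤ) = m + (n₀ : ℤ)
  · rw [if_neg (show ¬(m' + (n:ℤ) = m - (n₀:ℤ)) by omega), mul_zero]
  · rw [if_neg hA, zero_mul]

lemma single_mem_commutator (hS : ∀ n ∈ S, 1 ≤ n) (hne : S.Nonempty) (m : ℤ) (c : ZMod p) :
    (⟨HahnSeries.single m c, (0 : Kp p)⟩ : GS p S) ∈ commutator (GS p S) := by
  obtain ⟨n₀, hn₀⟩ := hne
  have h := GS.commutator_eq (p := p) (S := S)
    ⟨0, HahnSeries.single (m - (n₀ : ℤ)) c⟩ ⟨0, HahnSeries.single (m + (n₀ : ℤ)) 1⟩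
  rw [show (⟨0, HahnSeries.single (m - (n₀ : ℤ)) c⟩ : GS p S).b
      = HahnSeries.single (m - (n₀ : ℤ)) c from rfl,
    show (⟨0, HahnSeries.single (m + (n₀ : ℤ)) 1⟩ : GS p S).b
      = HahnSeries.single (m + (n₀ : ℤ)) 1 from rfl,
    etaS_single_single hS hn₀ m c 1, etaS_single_single' hS n₀ m c 1, mul_one,
    sub_zero] at h
  rw [commutator_def]
  exact h ▸ Subgroup.commutator_mem_commutator (Subgroup.mem_top _) (Subgroup.mem_top _)

lemma finsupp_mem_commutator (hS : ∀ n ∈ S, 1 ≤ n) (hne : S.Nonempty)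
    (t : Finset ℤ) : ∀ (d : Kp p), d.support ⊆ ↑t →
    (⟨d, (0 : Kp p)⟩ : GS p S) ∈ commutator (GS p S) := by
  classical
  induction t using Finset.induction_on with
  | empty =>
    intro d hd
    have hd0 : d = 0 := by
      apply HahnSeries.ext
      funext j
      by_contra hj
      exact absurd (hd ((HahnSeries.mem_support d j).2 hj)) (by simp)
    subst hd0
    exact (commutator (GS p S)).one_mem
  | insert j t' hj ih =>
    intro d hd
    set c := d.coeff j with hc
    set d' : Kp p := d - HahnSeries.single j c with hd'
    have hsupp : d'.support ⊆ ↑t' := by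
      intro i hi
      rw [HahnSeries.mem_support, hd', HahnSeries.coeff_sub, HahnSeries.coeff_single] at hi
      by_cases hij : i = j
      · subst hij; simp [hc] at hi
      · rw [if_neg hij, sub_zero] at hi
        have := hd ((HahnSeries.mem_support d i).2 hi)
        simp only [Finset.coe_insert, Set.mem_insert_iff] at this
        rcases this with h | h
        · exact absurd h hij
        · exact h
    have heq : (⟨d, (0 : Kp p)⟩ : GS p S)
        = (⟨HahnSeries.single j c, 0⟩ : GS p S) * ⟨d', 0⟩ := by
      refine GS.ext ?_ ?_
      · show d = HahnSeries.single j c + d' + etaS p S 0 0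
        rw [etaS_zero_left, add_zero, hd']
        abel
      · show (0 : Kp p) = 0 + 0
        rw [add_zero]
    rw [heq]
    exact mul_mem (single_mem_commutator hS hne j c) (ih d' hsupp)

/-- Truncation of a Laurent series: keep coefficients in degrees `< k`. -/
def trunc (p : ℕ) (k : ℤ) (x : Kp p) : Kp p :=
  ⟨fun j => if j < k then x.coeff j else 0, by
    apply x.isPWO_support'.mono
    intro j hj
    simp only [Function.mem_support] at hj ⊢
    intro h
    rw [h, if_pos] at hj <;> simp_all⟩

lemma trunc_coeff (p : ℕ) (k : ℤ) (x : Kp p) (j : ℤ) :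
    (trunc p k x).coeff j = if j < k then x.coeff j else 0 := rfl

lemma trunc_support_finite (p : ℕ) (k : ℤ) (x : Kp p) :
    (trunc p k x).support.Finite := by
  by_cases hx : x = 0
  · subst hx
    have : (trunc p k (0 : Kp p)).support = ∅ := by
      ext j
      simp [HahnSeries.mem_support, trunc_coeff, ite_self]
    rw [this]; exact Set.finite_empty
  · apply (Set.finite_Icc x.order (k - 1)).subset
    intro j hj
    rw [HahnSeries.mem_support, trunc_coeff] at hj
    by_cases hjk : j < k
    · rw [if_pos hjk] at hj
      exact ⟨HahnSeries.order_le_of_coeff_ne_zero hj, by omega⟩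
    · rw [if_neg hjk] at hj; exact absurd rfl hj

lemma trunc_mem_commutator (hS : ∀ n ∈ S, 1 ≤ n) (hne : S.Nonempty) (k : ℤ) (x : Kp p) :
    (⟨trunc p k x, (0 : Kp p)⟩ : GS p S) ∈ commutator (GS p S) := by
  classical
  exact finsupp_mem_commutator hS hne (trunc_support_finite p k x).toFinset _
    (by intro j hj; rwa [Set.Finite.coe_toFinset])

lemma sub_trunc_mem (p : ℕ) (i k : ℤ) (hik : i ≤ k) (x : Kp p) :
    trunc p k x - x ∈ hahnU (ZMod p) i := by
  intro j hj
  rw [HahnSeries.coeff_sub, trunc_coeff, if_pos (by omega), sub_self]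

lemma isOpen_preimage_mk (R : Type*) [AddCommGroup R] (k : ℤ)
    (A : Set (HahnSeries ℤ R ⧸ hahnU R k)) :
    IsOpen ((fun x : HahnSeries ℤ R => (QuotientAddGroup.mk x : HahnSeries ℤ R ⧸ hahnU R k))
      ⁻¹' A) := by
  have h2 : IsOpen[TopologicalSpace.induced
      (fun x : HahnSeries ℤ R => (QuotientAddGroup.mk x : HahnSeries ℤ R ⧸ hahnU R k)) ⊥]
      ((fun x : HahnSeries ℤ R =>
        (QuotientAddGroup.mk x : HahnSeries ℤ R ⧸ hahnU R k)) ⁻¹' A) :=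
    ⟨A, @isOpen_discrete _ ⊥ (discreteTopology_bot _) A, rfl⟩
  exact h2.mono (iInf_le _ k)

lemma hahnU_isClosed (R : Type*) [AddCommGroup R] (k : ℤ) :
    IsClosed ((hahnU R k : AddSubgroup (HahnSeries ℤ R)) : Set (HahnSeries ℤ R)) := by
  have heq : ((hahnU R k : AddSubgroup (HahnSeries ℤ R)) : Set (HahnSeries ℤ R))
      = (fun x : HahnSeries ℤ R =>
          (QuotientAddGroup.mk x : HahnSeries ℤ R ⧸ hahnU R k)) ⁻¹' {0} := by
    ext x
    simp only [Set.mem_preimage, Set.mem_singleton_iff, SetLike.mem_coe]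
    exact (QuotientAddGroup.eq_zero_iff x).symm
  rw [heq, ← isOpen_compl_iff, ← Set.preimage_compl]
  exact isOpen_preimage_mk R k _

lemma zero_isClosed (R : Type*) [AddCommGroup R] :
    IsClosed ({0} : Set (HahnSeries ℤ R)) := by
  have heq : ({0} : Set (HahnSeries ℤ R))
      = ⋂ k : ℤ, ((hahnU R k : AddSubgroup (HahnSeries ℤ R)) : Set (HahnSeries ℤ R)) := by
    ext x
    simp only [Set.mem_singleton_iff, Set.mem_iInter, SetLike.mem_coe]
    constructor
    · rintro rfl k; exact (hahnU R k).zero_mem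
    · intro h
      apply HahnSeries.ext
      funext j
      exact h (j + 1) j (by omega)
  rw [heq]
  exact isClosed_iInter fun k => hahnU_isClosed R k

lemma continuous_b : Continuous (fun g : GS p S => g.b) := by
  have h : Continuous (fun g : GS p S => (g.a, g.b)) :=
    continuous_iff_le_induced.mpr (le_of_eq rfl)
  exact continuous_snd.comp h

lemma N_isClosed : IsClosed {g : GS p S | g.b = 0} := by
  have : {g : GS p S | g.b = 0} = (fun g : GS p S => g.b) ⁻¹' {0} := rfl
  rw [this]
  exact (zero_isClosed (ZMod p)).preimage continuous_b

lemma tendsto_trunc (p : ℕ) (x : Kp p) :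
    Filter.Tendsto (fun k : ℕ => trunc p (k : ℤ) x) atTop (𝓝 x) := by
  have hnh : (𝓝 x : Filter (Kp p)) = ⨅ i : ℤ, @nhds _ (TopologicalSpace.induced
      (fun y : Kp p => (QuotientAddGroup.mk y : Kp p ⧸ hahnU (ZMod p) i)) ⊥) x :=
    nhds_iInf
  rw [hnh, Filter.tendsto_iInf]
  intro i
  have hind := @nhds_induced (Kp p ⧸ hahnU (ZMod p) i) (Kp p) ⊥
    (fun y : Kp p => (QuotientAddGroup.mk y : Kp p ⧸ hahnU (ZMod p) i)) x
  rw [hind, Filter.tendsto_comap_iff]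
  letI : TopologicalSpace (Kp p ⧸ hahnU (ZMod p) i) := ⊥
  haveI : DiscreteTopology (Kp p ⧸ hahnU (ZMod p) i) := ⟨rfl⟩
  rw [nhds_discrete]
  rw [Filter.tendsto_pure]
  rw [Filter.eventually_atTop]
  refine ⟨i.toNat, fun k hk => ?_⟩
  have hmem : -(trunc p (k : ℤ) x) + x ∈ hahnU (ZMod p) i := by
    have h1 := (hahnU (ZMod p) i).neg_mem (sub_trunc_mem p i k (by omega) x)
    have h2 : -(trunc p (k : ℤ) x - x) = -(trunc p (k : ℤ) x) + x := by abel
    rwa [h2] at h1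
  exact (QuotientAddGroup.eq).mpr hmem

end Aux

/-- Let `S ⊆ {1,2,3,…}` be nonempty.  Then the closure of the commutator
subgroup of `G_S` (with respect to the product topology on `K × K`) equals the central
subgroup `N = K × {0} = {(a,0) : a ∈ K}`. -/
theorem statement8 (p : ℕ) (hp : p.Prime) (S : Set ℕ) (hS : ∀ n ∈ S, 1 ≤ n)
    (hne : S.Nonempty) :
    closure ((commutator (GS p S) : Subgroup (GS p S)) : Set (GS p S))
      = {g : GS p S | g.b = 0} := by
  apply Set.Subset.antisymm
  · apply closure_minimal ?_ N_isClosed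
    intro g hg
    have hle : commutator (GS p S) ≤ {
        carrier := {g : GS p S | g.b = 0}
        one_mem' := rfl
        mul_mem' := by
          intro a b ha hb
          show (a * b).b = 0
          rw [GS.mul_b, ha, hb, add_zero]
        inv_mem' := by
          intro a ha
          show (a⁻¹).b = 0
          rw [GS.inv_b, ha, neg_zero] } := by
      rw [commutator_def]
      rw [Subgroup.commutator_le]
      intro g1 _ g2 _
      open scoped commutatorElement in show (⁅g1, g2⁆).b = 0
      rw [GS.commutator_eq]
    exact hle hg
  · intro g hg
    have hgb : g.b = 0 := hg
    have ht : Filter.Tendsto (fun k : ℕ => (⟨trunc p (k : ℤ) g.a, 0⟩ : GS p S))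
        atTop (𝓝 g) := by
      have h1 : Filter.Tendsto (fun k : ℕ => trunc p (k : ℤ) g.a) atTop (𝓝 g.a) :=
        tendsto_trunc p g.a
      have h2 : Filter.Tendsto (fun _ : ℕ => (0 : Kp p)) atTop (𝓝 g.b) := by
        rw [hgb]; exact tendsto_const_nhds
      have hind := @nhds_induced (Kp p × Kp p) (GS p S) _
        (fun g : GS p S => (g.a, g.b)) g
      rw [hind, Filter.tendsto_comap_iff]
      exact (h1.prodMk_nhds h2 :)
    exact mem_closure_of_tendsto ht (Filter.Eventually.of_forall fun k =>
      trunc_mem_commutator hS hne (k : ℤ) g.a)
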